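/- Let F be a finite field, n ≥ 1, and P, Q ⊆ [n]×[n]. Suppose S_1,…,S_n and T_1,…,T_n are staircases in ℝ² satisfying: d_s(S_i, T_j) = 3 if (i,j) ∈ P and d_s(S_i, T_j) = 1 if (i,j) ∉ P, and d_s(T_j, S_i) = 3 if (j,i) ∈ Q and d_s(T_j, S_i) = 1 if (j,i) ∉ Q, for all i, j ∈ [n]. Let M = ⊕_{i=1}^{n} k_{S_i} and N = ⊕_{j=1}^{n} k_{T_j}. If the CI instance (n,P,Q) is solvable, then M and N are 1-interleaved but not ε-interleaved for any ε < 1, so d_I(M,N) = 1. If the CI instance (n,P,Q) is not solvable, then M and N are 3-interleaved but not ε-interleaved for any ε < 3, so d_I(M,N) = 3. -/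

import Mathlib

structure PersMod (F : Type) [Field F] where
  space : ℝ × ℝ → Type
  [isACG : ∀ p, AddCommGroup (space p)]
  [isMod : ∀ p, Module F (space p)]
  map : ∀ {p q : ℝ × ℝ}, p ≤ q → (space p →ₗ[F] space q)
  map_id : ∀ p : ℝ × ℝ, map (le_refl p) = LinearMap.id
  map_comp : ∀ {p q r : ℝ × ℝ} (hpq : p ≤ q) (hqr : q ≤ r),
      map hqr ∘ₗ map hpq = map (le_trans hpq hqr)

attribute [instance] PersMod.isACG PersMod.isMod

variable {F : Type} [Field F]

/-- `f` is a morphism of persistence modules `M → N`. -/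
def IsHom (M N : PersMod F) (f : ∀ p, M.space p →ₗ[F] N.space p) : Prop :=
  ∀ ⦃p q : ℝ × ℝ⦄ (h : p ≤ q), N.map h ∘ₗ f p = f q ∘ₗ M.map h

/-- `f` is a morphism of persistence modules `M → N^ε` (the `ε`-shift of `N`). -/
def IsHomShift (M N : PersMod F) (ε : ℝ)
    (f : ∀ p : ℝ × ℝ, M.space p →ₗ[F] N.space (p + (ε, ε))) : Prop :=
  ∀ ⦃p q : ℝ × ℝ⦄ (h : p ≤ q),
    N.map (add_le_add h (le_refl ((ε : ℝ), (ε : ℝ)))) ∘ₗ f p = f q ∘ₗ M.map h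

/-- `(f, g)` is an `ε`-interleaving between `M` and `N`. -/
def IsInterleaving (M N : PersMod F) (ε : ℝ)
    (f : ∀ p : ℝ × ℝ, M.space p →ₗ[F] N.space (p + (ε, ε)))
    (g : ∀ p : ℝ × ℝ, N.space p →ₗ[F] M.space (p + (ε, ε))) : Prop :=
  IsHomShift M N ε f ∧ IsHomShift N M ε g ∧
  (∀ (p : ℝ × ℝ) (h : p ≤ p + (ε, ε) + (ε, ε)), g (p + (ε, ε)) ∘ₗ f p = M.map h) ∧
  (∀ (p : ℝ × ℝ) (h : p ≤ p + (ε, ε) + (ε, ε)), f (p + (ε, ε)) ∘ₗ g p = N.map h)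

def upset (a : ℝ × ℝ) : Set (ℝ × ℝ) := {x | a ≤ x}

def IsStaircase (S : Set (ℝ × ℝ)) : Prop :=
  ∃ A : Finset (ℝ × ℝ), A.Nonempty ∧ S = ⋃ a ∈ A, upset a

def UpClosed (U : Set (ℝ × ℝ)) : Prop :=
  ∀ ⦃p q : ℝ × ℝ⦄, p ≤ q → p ∈ U → q ∈ U

theorem IsStaircase.upClosed {S : Set (ℝ × ℝ)} (hS : IsStaircase S) : UpClosed S := by
  obtain ⟨A, -, rfl⟩ := hS
  intro p q hpq hp
  simp only [Set.mem_iUnion] at hp ⊢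
  obtain ⟨a, ha, hpa⟩ := hp
  exact ⟨a, ha, le_trans hpa hpq⟩

open Classical in
/-- The fiber of the staircase module over `U` at `p` : `F` if `p ∈ U`, else `0`,
realized as a submodule of `F`. -/
noncomputable def lineAt (F : Type) [Field F] (U : Set (ℝ × ℝ)) (p : ℝ × ℝ) :
    Submodule F F :=
  if p ∈ U then ⊤ else ⊥

/-- The interval (staircase) module `k_U` of an upward closed set `U`. -/
noncomputable def stairMod (F : Type) [Field F] (U : Set (ℝ × ℝ)) (hU : UpClosed U) :
    PersMod F where
  space p := ↥(lineAt F U p)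
  map {p q} h := Submodule.inclusion (by
    by_cases hp : p ∈ U
    · simp [lineAt, hp, hU h hp]
    · simp [lineAt, hp])
  map_id p := rfl
  map_comp _ _ := rfl

/-- The element `1 ∈ F = (k_U)_p` for `p ∈ U`. -/
noncomputable def unitVec (F : Type) [Field F] (U : Set (ℝ × ℝ)) (p : ℝ × ℝ)
    (hp : p ∈ U) : ↥(lineAt F U p) :=
  ⟨1, by simp [lineAt, hp]⟩

/-- The value in `F` of an element of the fiber of `k_U` at `p`. -/
noncomputable def valAt (F : Type) [Field F] (U : Set (ℝ × ℝ)) (p : ℝ × ℝ) :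
    ↥(lineAt F U p) →ₗ[F] F :=
  (lineAt F U p).subtype

/-- Finite direct sums of persistence modules, defined pointwise. -/
noncomputable def dirSum {n : ℕ} (Ms : Fin n → PersMod F) : PersMod F where
  space p := ∀ i, (Ms i).space p
  map h := LinearMap.pi fun i => (Ms i).map h ∘ₗ LinearMap.proj i
  map_id p := by
    refine LinearMap.ext fun x => funext fun i => ?_
    simp [(Ms i).map_id]
  map_comp hpq hqr := by
    refine LinearMap.ext fun x => funext fun i => ?_
    simpa using LinearMap.congr_fun ((Ms i).map_comp hpq hqr) (x i)

/-- Direct sum of staircase modules. -/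
noncomputable def stairSum (F : Type) [Field F] {n : ℕ} (S : Fin n → Set (ℝ × ℝ))
    (hS : ∀ i, UpClosed (S i)) : PersMod F :=
  dirSum fun i => stairMod F (S i) (hS i)

/-- The `ε`-shift `S^ε = {x - (ε,ε) : x ∈ S}` of a set. -/
def shiftSet (S : Set (ℝ × ℝ)) (ε : ℝ) : Set (ℝ × ℝ) := {x | x + (ε, ε) ∈ S}

/-- The directed shift distance `d_s(S,T) = min {ε ≥ 0 : S ⊆ T^ε}`. -/
noncomputable def dirDist (S T : Set (ℝ × ℝ)) : ℝ :=
  sInf {ε : ℝ | 0 ≤ ε ∧ S ⊆ shiftSet T ε}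

/-- `M`, `N` are `ε`-interleaved. -/
def Interleaved (M N : PersMod F) (ε : ℝ) : Prop :=
  ∃ f g, IsInterleaving M N ε f g

/-- The interleaving distance. -/
noncomputable def interDist (M N : PersMod F) : ℝ :=
  sInf {ε : ℝ | 0 ≤ ε ∧ Interleaved M N ε}

/-- `S` has a finite generating set all of whose members are `≤ u`. -/
theorem upClosed_of_gens {S : Set (ℝ × ℝ)} {u : ℝ × ℝ}
    (h : ∃ A : Finset (ℝ × ℝ), A.Nonempty ∧ S = (⋃ a ∈ A, upset a) ∧ ∀ a ∈ A, a ≤ u) :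
    UpClosed S := by
  obtain ⟨A, hne, hSeq, -⟩ := h
  exact IsStaircase.upClosed ⟨A, hne, hSeq⟩

theorem mem_of_gens {S : Set (ℝ × ℝ)} {u v : ℝ × ℝ}
    (h : ∃ A : Finset (ℝ × ℝ), A.Nonempty ∧ S = (⋃ a ∈ A, upset a) ∧ ∀ a ∈ A, a ≤ u)
    (huv : u ≤ v) : v ∈ S := by
  obtain ⟨A, ⟨a, ha⟩, rfl, hle⟩ := h
  exact Set.mem_biUnion ha (le_trans (hle a ha) huv)

/-- `f : M → N^ε` has `δ`-trivial kernel: the induced map `ker f_p → ker f_{p+(δ,δ)}`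
is zero for all `p`. -/
def TrivialKerS (M N : PersMod F) (ε δ : ℝ)
    (f : ∀ p, M.space p →ₗ[F] N.space (p + (ε, ε))) : Prop :=
  ∀ (p : ℝ × ℝ) (x : M.space p), f p x = 0 → ∀ h : p ≤ p + (δ, δ), M.map h x = 0

/-- `f : M → N^ε` has `δ`-trivial cokernel: the induced map
`coker f_p → coker f_{p+(δ,δ)}` is zero for all `p`. -/
def TrivialCokerS (M N : PersMod F) (ε δ : ℝ)
    (f : ∀ p, M.space p →ₗ[F] N.space (p + (ε, ε))) : Prop :=
  ∀ (p : ℝ × ℝ) (y : N.space (p + (ε, ε))) (h : p + (ε, ε) ≤ p + (δ, δ) + (ε, ε)),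
    ∃ x : M.space (p + (δ, δ)), f (p + (δ, δ)) x = N.map h y

/-- `f : M → N` has `δ`-trivial kernel. -/
def TrivialKer (M N : PersMod F) (δ : ℝ) (f : ∀ p, M.space p →ₗ[F] N.space p) : Prop :=
  ∀ (p : ℝ × ℝ) (x : M.space p), f p x = 0 → ∀ h : p ≤ p + (δ, δ), M.map h x = 0

/-- `f : M → N` has `δ`-trivial cokernel. -/
def TrivialCoker (M N : PersMod F) (δ : ℝ) (f : ∀ p, M.space p →ₗ[F] N.space p) : Prop :=
  ∀ (p : ℝ × ℝ) (y : N.space p) (h : p ≤ p + (δ, δ)),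
    ∃ x : M.space (p + (δ, δ)), f (p + (δ, δ)) x = N.map h y

/-- The interior of an upward closed subset of `ℝ²` is upward closed. -/
theorem upClosed_interior {U : Set (ℝ × ℝ)} (hU : UpClosed U) :
    UpClosed (interior U) := by
  intro p q hpq hp
  have hsub : (fun x : ℝ × ℝ => x - (q - p)) ⁻¹' interior U ⊆ U := fun x hx =>
    hU (sub_le_self x (sub_nonneg.mpr hpq)) (interior_subset hx)
  have hopen : IsOpen ((fun x : ℝ × ℝ => x - (q - p)) ⁻¹' interior U) :=
    isOpen_interior.preimage (continuous_id.sub continuous_const)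
  have hq : q ∈ (fun x : ℝ × ℝ => x - (q - p)) ⁻¹' interior U := by
    show q - (q - p) ∈ interior U
    rwa [sub_sub_cancel]
  exact interior_maximal hsub hopen hq

/-- The dual persistence module: `(M*)_p = (M_{-p})^∨`. -/
noncomputable def dualMod (M : PersMod F) : PersMod F where
  space p := Module.Dual F (M.space (-p))
  map {p q} h := (M.map (neg_le_neg h)).dualMap
  map_id p := by
    have h : M.map (neg_le_neg (le_refl p)) = LinearMap.id := M.map_id (-p)
    ext φ x
    simp [h]
  map_comp hpq hqr := by
    ext φ x
    have h := LinearMap.congr_fun (M.map_comp (neg_le_neg hqr) (neg_le_neg hpq)) x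
    simp only [LinearMap.comp_apply, LinearMap.dualMap_apply] at h ⊢
    rw [h]

/-- The CI instance `(n, P, Q)` is solvable over `F`. -/
def CISolvable (F : Type) [Field F] (n : ℕ) (P Q : Set (Fin n × Fin n)) : Prop :=
  ∃ A B : Matrix (Fin n) (Fin n) F,
    (∀ ij ∈ P, A ij.1 ij.2 = 0) ∧ (∀ ij ∈ Q, B ij.1 ij.2 = 0) ∧ A * B = 1

/-!
At a point `p` lying in every `S i`, with `p + (ε, ε)` in every `T j`, the fibres of
`M = ⊕ k_{S i}` and `N = ⊕ k_{T j}` are `F^n`, so an `ε`-interleaving `(f, g)` yields matrices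
`A = [f_p]`, `B = [g_{p+(ε,ε)}]` with `A * B = 1`. Naturality forces `A i j = 0` whenever
`S i ⊄ T_j^ε`: push the generator of `k_{S i}` forward from a point `w ≤ p` of `S i` with
`w + (ε, ε) ∉ T j`; likewise for `B`. Conversely, matrices with this support pattern and
`A * B = 1` act coordinatewise as an `ε`-interleaving. So `M` and `N` are `ε`-interleaved iff the
CI instance forbidding the pairs at directed distance `> ε` is solvable (the distances are
attained because staircases are closed). With the prescribed distances this instance forbids
everything for `ε < 1`, is `(n, P, Q)` for `1 ≤ ε < 3`, and forbids nothing for `ε ≥ 3`.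
-/

open Filter Matrix

section Staircase

variable {S T : Set (ℝ × ℝ)}

lemma UpClosed.shiftSet_mono (hT : UpClosed T) {ε δ : ℝ} (h : ε ≤ δ) :
    shiftSet T ε ⊆ shiftSet T δ :=
  fun _ hx => hT (add_le_add le_rfl (Prod.mk_le_mk.2 ⟨h, h⟩)) hx

lemma UpClosed.eventually_mem (hT : UpClosed T) (hne : T.Nonempty) :
    ∀ᶠ p in atTop, p ∈ T :=
  (eventually_ge_atTop hne.some).mono fun _ hp => hT hp hne.some_mem

lemma IsStaircase.nonempty (hS : IsStaircase S) : S.Nonempty := by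
  obtain ⟨A, ⟨a, ha⟩, rfl⟩ := hS
  exact ⟨a, Set.mem_biUnion ha (le_refl a)⟩

lemma IsStaircase.isClosed (hS : IsStaircase S) : IsClosed S := by
  obtain ⟨A, -, rfl⟩ := hS
  exact isClosed_biUnion_finset fun a _ => isClosed_Ici

lemma IsStaircase.exists_subset_upset (hS : IsStaircase S) : ∃ m, S ⊆ upset m := by
  obtain ⟨A, -, rfl⟩ := hS
  obtain ⟨m, hm⟩ := A.finite_toSet.bddBelow
  exact ⟨m, Set.iUnion₂_subset fun a ha _ hx => le_trans (hm ha) hx⟩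

lemma exists_subset_shiftSet {m b : ℝ × ℝ} (hS : S ⊆ upset m) (hT : UpClosed T) (hb : b ∈ T) :
    ∃ ε, 0 ≤ ε ∧ S ⊆ shiftSet T ε := by
  refine ⟨max 0 (max (b.1 - m.1) (b.2 - m.2)), le_max_left _ _, fun x hx => hT ?_ hb⟩
  have hmx : m ≤ x := hS hx
  have h1 := le_max_left (b.1 - m.1) (b.2 - m.2)
  have h2 := le_max_right (b.1 - m.1) (b.2 - m.2)
  have h3 := le_max_right 0 (max (b.1 - m.1) (b.2 - m.2))
  constructor <;> simp only [Prod.fst_add, Prod.snd_add] <;> linarith [hmx.1, hmx.2]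

lemma isClosed_setOf_subset_shiftSet (hT : IsClosed T) :
    IsClosed {ε : ℝ | 0 ≤ ε ∧ S ⊆ shiftSet T ε} := by
  have h : {ε : ℝ | 0 ≤ ε ∧ S ⊆ shiftSet T ε} =
      Set.Ici 0 ∩ ⋂ x ∈ S, (fun ε : ℝ => x + (ε, ε)) ⁻¹' T := by
    ext ε
    simp [Set.subset_def, shiftSet]
  rw [h]
  exact isClosed_Ici.inter (isClosed_biInter fun x _ => hT.preimage (by fun_prop))

theorem IsStaircase.subset_shiftSet_iff (hS : IsStaircase S) (hT : IsStaircase T) {ε : ℝ}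
    (hε : 0 ≤ ε) : S ⊆ shiftSet T ε ↔ dirDist S T ≤ ε := by
  have hbdd : BddBelow {ε : ℝ | 0 ≤ ε ∧ S ⊆ shiftSet T ε} := ⟨0, fun _ h => h.1⟩
  refine ⟨fun h => csInf_le hbdd ⟨hε, h⟩, fun h => ?_⟩
  obtain ⟨m, hm⟩ := hS.exists_subset_upset
  obtain ⟨δ, hδ⟩ := exists_subset_shiftSet hm hT.upClosed hT.nonempty.some_mem
  have hmem := (isClosed_setOf_subset_shiftSet hT.isClosed).csInf_mem ⟨δ, hδ⟩ hbdd
  exact hmem.2.trans (hT.upClosed.shiftSet_mono h)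

end Staircase

section Coordinates

variable {n : ℕ} {S : Fin n → Set (ℝ × ℝ)}

lemma lineAt_eq_top {U : Set (ℝ × ℝ)} {p : ℝ × ℝ} (hp : p ∈ U) : lineAt F U p = ⊤ := if_pos hp

lemma lineAt_eq_bot {U : Set (ℝ × ℝ)} {p : ℝ × ℝ} (hp : p ∉ U) : lineAt F U p = ⊥ := if_neg hp

lemma valAt_eq_zero {U : Set (ℝ × ℝ)} {p : ℝ × ℝ} (hp : p ∉ U) (x : ↥(lineAt F U p)) :
    valAt F U p x = 0 := by
  simpa [valAt, lineAt_eq_bot hp] using x.2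

noncomputable def stairCoords (hS : ∀ i, UpClosed (S i)) (p : ℝ × ℝ) :
    (stairSum F S hS).space p →ₗ[F] Fin n → F :=
  LinearMap.pi fun k => valAt F (S k) p ∘ₗ LinearMap.proj k

variable {hS : ∀ i, UpClosed (S i)}

lemma stairCoords_injective {p : ℝ × ℝ} : Function.Injective (stairCoords (F := F) hS p) :=
  fun _ _ h => funext fun k => Subtype.ext (congrFun h k)

lemma stairCoords_surjective {p : ℝ × ℝ} (hp : ∀ k, p ∈ S k) :
    Function.Surjective (stairCoords (F := F) hS p) :=
  fun v => ⟨fun k => ⟨v k, by simp [lineAt_eq_top (hp k)]⟩, rfl⟩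

lemma stairCoords_eq_zero {p : ℝ × ℝ} {k : Fin n} (hp : p ∉ S k)
    (x : (stairSum F S hS).space p) : stairCoords hS p x k = 0 :=
  valAt_eq_zero hp (x k)

lemma stairCoords_map {p q : ℝ × ℝ} (h : p ≤ q) (x : (stairSum F S hS).space p) :
    stairCoords hS q ((stairSum F S hS).map h x) = stairCoords hS p x := rfl

noncomputable def stairCoordsEquiv {p : ℝ × ℝ} (hp : ∀ k, p ∈ S k) :
    (stairSum F S hS).space p ≃ₗ[F] Fin n → F :=
  LinearEquiv.ofBijective (stairCoords hS p) ⟨stairCoords_injective, stairCoords_surjective hp⟩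

noncomputable def stairSingle {w : ℝ × ℝ} (i : Fin n) (hw : w ∈ S i) :
    (stairSum F S hS).space w :=
  Pi.single (M := fun k => ↥(lineAt F (S k) w)) i (unitVec F (S i) w hw)

lemma stairCoords_stairSingle {w : ℝ × ℝ} {i : Fin n} (hw : w ∈ S i) :
    stairCoords hS w (stairSingle i hw) = (Pi.single i 1 : Fin n → F) := by
  ext k
  change (Pi.single (M := fun k => ↥(lineAt F (S k) w)) i (unitVec F (S i) w hw) k : F) = _
  rcases eq_or_ne k i with rfl | hki
  · simp [unitVec]
  · simp [hki]

lemma stairCoordsEquiv_symm_single {w p : ℝ × ℝ} (hp : ∀ k, p ∈ S k) (hwp : w ≤ p)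
    {i : Fin n} (hw : w ∈ S i) :
    (stairCoordsEquiv (hS := hS) hp).symm (Pi.single i 1) =
      (stairSum F S hS).map hwp (stairSingle i hw) :=
  (LinearEquiv.symm_apply_eq _).2 (stairCoords_stairSingle hw).symm

end Coordinates

section MatrixShift

variable {n : ℕ} {S T : Fin n → Set (ℝ × ℝ)} {hS : ∀ i, UpClosed (S i)}
  {hT : ∀ j, UpClosed (T j)} {ε : ℝ} {A B : Matrix (Fin n) (Fin n) F}

lemma vecMul_stairCoords_mem_lineAt (hA : ∀ i j, A i j ≠ 0 → S i ⊆ shiftSet (T j) ε)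
    {p : ℝ × ℝ} (x : (stairSum F S hS).space p) (j : Fin n) :
    (stairCoords hS p x ᵥ* A) j ∈ lineAt F (T j) (p + (ε, ε)) := by
  by_cases hq : p + (ε, ε) ∈ T j
  · simp [lineAt_eq_top hq]
  rw [lineAt_eq_bot hq, Submodule.mem_bot, vecMul, dotProduct]
  refine Finset.sum_eq_zero fun i _ => ?_
  by_cases hAij : A i j = 0
  · simp [hAij]
  · rw [stairCoords_eq_zero (fun hp => hq (hA i j hAij hp)), zero_mul]

noncomputable def matrixShift (A : Matrix (Fin n) (Fin n) F)
    (hA : ∀ i j, A i j ≠ 0 → S i ⊆ shiftSet (T j) ε) (p : ℝ × ℝ) :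
    (stairSum F S hS).space p →ₗ[F] (stairSum F T hT).space (p + (ε, ε)) :=
  LinearMap.pi fun j => LinearMap.codRestrict _
    (LinearMap.proj j ∘ₗ A.vecMulLinear ∘ₗ stairCoords hS p)
    fun x => vecMul_stairCoords_mem_lineAt hA x j

lemma stairCoords_matrixShift (hA : ∀ i j, A i j ≠ 0 → S i ⊆ shiftSet (T j) ε) {p : ℝ × ℝ}
    (x : (stairSum F S hS).space p) :
    stairCoords hT _ (matrixShift A hA p x) = stairCoords hS p x ᵥ* A := rfl

lemma isHomShift_matrixShift (hA : ∀ i j, A i j ≠ 0 → S i ⊆ shiftSet (T j) ε) :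
    IsHomShift (stairSum F S hS) (stairSum F T hT) ε (matrixShift A hA) :=
  fun _ _ _ => LinearMap.ext fun _ => stairCoords_injective rfl

lemma matrixShift_comp (hA : ∀ i j, A i j ≠ 0 → S i ⊆ shiftSet (T j) ε)
    (hB : ∀ j i, B j i ≠ 0 → T j ⊆ shiftSet (S i) ε) (hAB : A * B = 1) (p : ℝ × ℝ)
    (h : p ≤ p + (ε, ε) + (ε, ε)) :
    matrixShift (hS := hT) B hB (p + (ε, ε)) ∘ₗ matrixShift A hA p = (stairSum F S hS).map h :=
  LinearMap.ext fun x => stairCoords_injective <| by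
    rw [LinearMap.comp_apply, stairCoords_matrixShift, stairCoords_matrixShift, vecMul_vecMul,
      hAB, vecMul_one, stairCoords_map]

theorem interleaved_stairSum_of_matrices (hA : ∀ i j, A i j ≠ 0 → S i ⊆ shiftSet (T j) ε)
    (hB : ∀ j i, B j i ≠ 0 → T j ⊆ shiftSet (S i) ε) (hAB : A * B = 1) :
    Interleaved (stairSum F S hS) (stairSum F T hT) ε :=
  ⟨matrixShift A hA, matrixShift B hB, isHomShift_matrixShift hA, isHomShift_matrixShift hB,
    matrixShift_comp hA hB hAB, matrixShift_comp hB hA (mul_eq_one_comm.1 hAB)⟩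

end MatrixShift

section ShiftMatrix

variable {n : ℕ} {S T U : Fin n → Set (ℝ × ℝ)} {hS : ∀ i, UpClosed (S i)}
  {hT : ∀ j, UpClosed (T j)} {hU : ∀ k, UpClosed (U k)} {p q r : ℝ × ℝ}

/-- Rows are indexed by the source (the transpose of `LinearMap.toMatrix'`), so that the
composite `g ∘ f` has matrix `shiftMatrix f * shiftMatrix g`, matching `A * B = 1` in
`CISolvable`. -/
noncomputable def shiftMatrix (hp : ∀ i, p ∈ S i) (hq : ∀ j, q ∈ T j)
    (f : (stairSum F S hS).space p →ₗ[F] (stairSum F T hT).space q) :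
    Matrix (Fin n) (Fin n) F :=
  (LinearMap.toMatrix'
    ((stairCoordsEquiv hq).toLinearMap ∘ₗ f ∘ₗ (stairCoordsEquiv hp).symm.toLinearMap))ᵀ

lemma shiftMatrix_apply (hp : ∀ i, p ∈ S i) (hq : ∀ j, q ∈ T j)
    (f : (stairSum F S hS).space p →ₗ[F] (stairSum F T hT).space q) (i j : Fin n) :
    shiftMatrix hp hq f i j =
      stairCoords hT q (f ((stairCoordsEquiv hp).symm (Pi.single i 1))) j :=
  rfl

lemma shiftMatrix_mul (hp : ∀ i, p ∈ S i) (hq : ∀ j, q ∈ T j) (hr : ∀ k, r ∈ U k)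
    (f : (stairSum F S hS).space p →ₗ[F] (stairSum F T hT).space q)
    (g : (stairSum F T hT).space q →ₗ[F] (stairSum F U hU).space r) :
    shiftMatrix hp hq f * shiftMatrix hq hr g = shiftMatrix hp hr (g ∘ₗ f) := by
  unfold shiftMatrix
  rw [← transpose_mul, ← LinearMap.toMatrix'_comp]
  congr 2
  refine LinearMap.ext fun x => ?_
  simp

lemma shiftMatrix_map (hp : ∀ i, p ∈ S i) (hq : ∀ i, q ∈ S i) (hpq : p ≤ q) :
    shiftMatrix hp hq ((stairSum F S hS).map hpq) = 1 := by
  unfold shiftMatrix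
  rw [← transpose_one, ← LinearMap.toMatrix'_id]
  congr 2
  refine LinearMap.ext fun x => ?_
  exact (stairCoordsEquiv hp).apply_symm_apply x

end ShiftMatrix

section Extraction

variable {n : ℕ} {S T : Fin n → Set (ℝ × ℝ)} {ε : ℝ}
  {hS : ∀ i, UpClosed (S i)} {hT : ∀ j, UpClosed (T j)}

lemma IsHomShift.stairCoords_map_eq_zero {M : PersMod F}
    {f : ∀ p : ℝ × ℝ, M.space p →ₗ[F] (stairSum F T hT).space (p + (ε, ε))}
    (hf : IsHomShift M (stairSum F T hT) ε f) {w q : ℝ × ℝ} (h : w ≤ q) (y : M.space w)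
    {j : Fin n} (hw : w + (ε, ε) ∉ T j) :
    stairCoords hT _ (f q (M.map h y)) j = 0 := by
  rw [← LinearMap.comp_apply (f q) (M.map h), ← hf h, LinearMap.comp_apply, stairCoords_map]
  exact stairCoords_eq_zero hw _

lemma eventually_exists_le_of_not_subset_shiftSet (V W : Set (ℝ × ℝ)) (ε : ℝ) :
    ∀ᶠ p in atTop, ¬ V ⊆ shiftSet W ε → ∃ w ≤ p, w ∈ V ∧ w + (ε, ε) ∉ W := by
  by_cases h : V ⊆ shiftSet W ε
  · exact Eventually.of_forall fun _ h' => absurd h h'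
  obtain ⟨w, hwV, hwW⟩ := Set.not_subset.1 h
  exact (eventually_ge_atTop w).mono fun _ hwp _ => ⟨w, hwp, hwV, hwW⟩

lemma exists_point_above_witnesses (hS : ∀ i, UpClosed (S i)) (hT : ∀ j, UpClosed (T j))
    (hSne : ∀ i, (S i).Nonempty) (hTne : ∀ j, (T j).Nonempty) :
    ∃ p : ℝ × ℝ, (∀ i, p ∈ S i) ∧ (∀ j, p + (ε, ε) ∈ T j) ∧
      (∀ i j, ¬ S i ⊆ shiftSet (T j) ε → ∃ w ≤ p, w ∈ S i ∧ w + (ε, ε) ∉ T j) ∧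
      (∀ j i, ¬ T j ⊆ shiftSet (S i) ε → ∃ w ≤ p + (ε, ε), w ∈ T j ∧ w + (ε, ε) ∉ S i) := by
  have hshift : Tendsto (· + ((ε, ε) : ℝ × ℝ)) atTop atTop :=
    tendsto_atTop_add_const_right _ _ tendsto_id
  exact ((eventually_all.2 fun i => (hS i).eventually_mem (hSne i)).and
    ((eventually_all.2 fun j => hshift.eventually ((hT j).eventually_mem (hTne j))).and
    ((eventually_all.2 fun i => eventually_all.2 fun j =>
      eventually_exists_le_of_not_subset_shiftSet (S i) (T j) ε).and
    (eventually_all.2 fun j => eventually_all.2 fun i =>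
      hshift.eventually (eventually_exists_le_of_not_subset_shiftSet (T j) (S i) ε))))).exists

theorem exists_matrices_of_isInterleaving (hSne : ∀ i, (S i).Nonempty)
    (hTne : ∀ j, (T j).Nonempty) (hε : 0 ≤ ε)
    {f : ∀ p : ℝ × ℝ, (stairSum F S hS).space p →ₗ[F] (stairSum F T hT).space (p + (ε, ε))}
    {g : ∀ p : ℝ × ℝ, (stairSum F T hT).space p →ₗ[F] (stairSum F S hS).space (p + (ε, ε))}
    (hfg : IsInterleaving (stairSum F S hS) (stairSum F T hT) ε f g) :
    ∃ A B : Matrix (Fin n) (Fin n) F, (∀ i j, ¬ S i ⊆ shiftSet (T j) ε → A i j = 0) ∧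
      (∀ j i, ¬ T j ⊆ shiftSet (S i) ε → B j i = 0) ∧ A * B = 1 := by
  obtain ⟨hf, hg, hgf, -⟩ := hfg
  obtain ⟨p, hpS, hpT, hwS, hwT⟩ := exists_point_above_witnesses (ε := ε) hS hT hSne hTne
  have hle : p ≤ p + (ε, ε) + (ε, ε) := by
    have : (0 : ℝ × ℝ) ≤ (ε, ε) := ⟨hε, hε⟩
    calc p ≤ p + (ε, ε) := le_add_of_nonneg_right this
      _ ≤ p + (ε, ε) + (ε, ε) := le_add_of_nonneg_right this
  have hpS' : ∀ i, p + (ε, ε) + (ε, ε) ∈ S i := fun i => hS i hle (hpS i)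
  refine ⟨shiftMatrix hpS hpT (f p), shiftMatrix hpT hpS' (g (p + (ε, ε))),
    fun i j hij => ?_, fun j i hji => ?_, ?_⟩
  · obtain ⟨w, hwp, hwi, hwj⟩ := hwS i j hij
    rw [shiftMatrix_apply, stairCoordsEquiv_symm_single hpS hwp hwi]
    exact hf.stairCoords_map_eq_zero hwp _ hwj
  · obtain ⟨w, hwp, hwj, hwi⟩ := hwT j i hji
    rw [shiftMatrix_apply, stairCoordsEquiv_symm_single hpT hwp hwj]
    exact hg.stairCoords_map_eq_zero hwp _ hwi
  · rw [shiftMatrix_mul, hgf p hle, shiftMatrix_map]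

theorem interleaved_stairSum_iff (hSne : ∀ i, (S i).Nonempty) (hTne : ∀ j, (T j).Nonempty)
    (hε : 0 ≤ ε) :
    Interleaved (stairSum F S hS) (stairSum F T hT) ε ↔
      CISolvable F n {ij | ¬ S ij.1 ⊆ shiftSet (T ij.2) ε}
        {ji | ¬ T ji.1 ⊆ shiftSet (S ji.2) ε} := by
  constructor
  · rintro ⟨f, g, hfg⟩
    obtain ⟨A, B, hA, hB, hAB⟩ := exists_matrices_of_isInterleaving hSne hTne hε hfg
    exact ⟨A, B, fun ij hij => hA _ _ hij, fun ji hji => hB _ _ hji, hAB⟩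
  · rintro ⟨A, B, hA, hB, hAB⟩
    exact interleaved_stairSum_of_matrices (fun i j h => not_not.1 (mt (hA (i, j)) h))
      (fun j i h => not_not.1 (mt (hB (j, i)) h)) hAB

end Extraction

section CISolvable

variable {n : ℕ} {P Q P' Q' : Set (Fin n × Fin n)}

lemma CISolvable.mono (h : CISolvable F n P Q) (hP : P' ⊆ P) (hQ : Q' ⊆ Q) :
    CISolvable F n P' Q' :=
  let ⟨A, B, hA, hB, hAB⟩ := h
  ⟨A, B, fun ij hij => hA ij (hP hij), fun ji hji => hB ji (hQ hji), hAB⟩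

lemma ciSolvable_empty : CISolvable F n ∅ ∅ :=
  ⟨1, 1, fun _ h => h.elim, fun _ h => h.elim, mul_one 1⟩

lemma not_ciSolvable_univ (hn : 1 ≤ n) : ¬ CISolvable F n Set.univ Q := by
  rintro ⟨A, B, hA, -, hAB⟩
  have : Nonempty (Fin n) := ⟨⟨0, hn⟩⟩
  have hA0 : A = 0 := Matrix.ext fun i j => hA (i, j) trivial
  rw [hA0, zero_mul] at hAB
  exact zero_ne_one hAB

/-- The pairs whose prescribed distance, `3` on `P` and `1` off `P`, exceeds `ε`. -/
def farPairs (P : Set (Fin n × Fin n)) (ε : ℝ) : Set (Fin n × Fin n) :=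
  {ij | ε < 1 ∨ ij ∈ P ∧ ε < 3}

lemma lt_three_of_mem_farPairs {ij : Fin n × Fin n} {ε : ℝ} (h : ij ∈ farPairs P ε) : ε < 3 :=
  h.elim (fun h1 => h1.trans (by norm_num)) And.right

lemma mem_farPairs_iff_lt {ij : Fin n × Fin n} {ε d : ℝ} (h3 : ij ∈ P → d = 3)
    (h1 : ij ∉ P → d = 1) : ij ∈ farPairs P ε ↔ ε < d := by
  by_cases h : ij ∈ P
  · rw [h3 h]
    exact ⟨lt_three_of_mem_farPairs, fun hε => Or.inr ⟨h, hε⟩⟩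
  · simp [farPairs, h, h1 h]

lemma ciSolvable_farPairs_iff_of_ciSolvable (hn : 1 ≤ n) (h : CISolvable F n P Q) (ε : ℝ) :
    CISolvable F n (farPairs P ε) (farPairs Q ε) ↔ 1 ≤ ε :=
  ⟨fun hε => not_lt.1 fun hlt => not_ciSolvable_univ (Q := ∅) hn
      (hε.mono (fun _ _ => Or.inl hlt) (Set.empty_subset _)),
    fun hε => h.mono (fun _ hij => (hij.resolve_left (not_lt.2 hε)).1)
      (fun _ hji => (hji.resolve_left (not_lt.2 hε)).1)⟩

lemma ciSolvable_farPairs_iff_of_not_ciSolvable (h : ¬ CISolvable F n P Q) (ε : ℝ) :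
    CISolvable F n (farPairs P ε) (farPairs Q ε) ↔ 3 ≤ ε :=
  ⟨fun hε => not_lt.1 fun hlt => h (hε.mono (fun _ hij => Or.inr ⟨hij, hlt⟩)
      (fun _ hji => Or.inr ⟨hji, hlt⟩)),
    fun hε => ciSolvable_empty.mono (fun _ hij => hε.not_gt (lt_three_of_mem_farPairs hij))
      (fun _ hji => hε.not_gt (lt_three_of_mem_farPairs hji))⟩

end CISolvable

theorem interleaved_threshold_of_iff {M N : PersMod F} {d : ℝ} (hd : 0 ≤ d)
    (h : ∀ ε, 0 ≤ ε → (Interleaved M N ε ↔ d ≤ ε)) :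
    Interleaved M N d ∧ (∀ ε, 0 ≤ ε → ε < d → ¬ Interleaved M N ε) ∧ interDist M N = d := by
  have hd' : Interleaved M N d := (h d hd).2 le_rfl
  refine ⟨hd', fun ε hε hlt hint => hlt.not_ge ((h ε hε).1 hint), ?_⟩
  refine le_antisymm (csInf_le ⟨0, fun _ h => h.1⟩ ⟨hd, hd'⟩) ?_
  exact le_csInf ⟨d, hd, hd'⟩ fun ε ⟨hε, hint⟩ => (h ε hε).1 hint

theorem stmt_10_general (F : Type) [Field F] (n : ℕ) (hn : 1 ≤ n)
    (P Q : Set (Fin n × Fin n)) (S T : Fin n → Set (ℝ × ℝ))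
    (hS : ∀ i, IsStaircase (S i)) (hT : ∀ j, IsStaircase (T j))
    (hST : ∀ i j, ((i, j) ∈ P → dirDist (S i) (T j) = 3) ∧
                  ((i, j) ∉ P → dirDist (S i) (T j) = 1))
    (hTS : ∀ i j, ((j, i) ∈ Q → dirDist (T j) (S i) = 3) ∧
                  ((j, i) ∉ Q → dirDist (T j) (S i) = 1)) :
    (CISolvable F n P Q →
      Interleaved (stairSum F S fun i => (hS i).upClosed)
          (stairSum F T fun j => (hT j).upClosed) 1 ∧
      (∀ ε : ℝ, 0 ≤ ε → ε < 1 →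
        ¬ Interleaved (stairSum F S fun i => (hS i).upClosed)
            (stairSum F T fun j => (hT j).upClosed) ε) ∧
      interDist (stairSum F S fun i => (hS i).upClosed)
          (stairSum F T fun j => (hT j).upClosed) = 1) ∧
    (¬ CISolvable F n P Q →
      Interleaved (stairSum F S fun i => (hS i).upClosed)
          (stairSum F T fun j => (hT j).upClosed) 3 ∧
      (∀ ε : ℝ, 0 ≤ ε → ε < 3 →
        ¬ Interleaved (stairSum F S fun i => (hS i).upClosed)
            (stairSum F T fun j => (hT j).upClosed) ε) ∧
      interDist (stairSum F S fun i => (hS i).upClosed)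
          (stairSum F T fun j => (hT j).upClosed) = 3) := by
  have key : ∀ ε, 0 ≤ ε → (Interleaved (stairSum F S fun i => (hS i).upClosed)
      (stairSum F T fun j => (hT j).upClosed) ε ↔
        CISolvable F n (farPairs P ε) (farPairs Q ε)) := by
    intro ε hε
    have hP : ∀ i j, ¬ S i ⊆ shiftSet (T j) ε ↔ (i, j) ∈ farPairs P ε := fun i j => by
      rw [(hS i).subset_shiftSet_iff (hT j) hε, not_le,
        mem_farPairs_iff_lt (hST i j).1 (hST i j).2]
    have hQ : ∀ j i, ¬ T j ⊆ shiftSet (S i) ε ↔ (j, i) ∈ farPairs Q ε := fun j i => by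
      rw [(hT j).subset_shiftSet_iff (hS i) hε, not_le,
        mem_farPairs_iff_lt (hTS i j).1 (hTS i j).2]
    simpa only [hP, hQ, Prod.mk.eta, Set.ofPred_mem_eq] using
      interleaved_stairSum_iff (fun i => (hS i).nonempty) (fun j => (hT j).nonempty) hε
  exact ⟨fun h => interleaved_threshold_of_iff zero_le_one fun ε hε =>
      (key ε hε).trans (ciSolvable_farPairs_iff_of_ciSolvable hn h ε),
    fun h => interleaved_threshold_of_iff zero_le_three fun ε hε =>
      (key ε hε).trans (ciSolvable_farPairs_iff_of_not_ciSolvable h ε)⟩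

/-- **CI solvability determines the interleaving distance.** If staircases realize the
prescribed directed shift distances (3 on `P`/`Q`, 1 otherwise), then the direct sums
`M = ⊕ k_{S_i}`, `N = ⊕ k_{T_j}` satisfy: `d_I(M,N) = 1` (with 1-interleaving attained,
and no `ε`-interleaving for `ε < 1`) if the CI instance is solvable, and `d_I(M,N) = 3`
(with 3-interleaving attained, and none for `ε < 3`) otherwise. -/
theorem stmt_10 (F : Type) [Field F] [Fintype F] (n : ℕ) (hn : 1 ≤ n)
    (P Q : Set (Fin n × Fin n)) (S T : Fin n → Set (ℝ × ℝ))
    (hS : ∀ i, IsStaircase (S i)) (hT : ∀ j, IsStaircase (T j))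
    (hST : ∀ i j, ((i, j) ∈ P → dirDist (S i) (T j) = 3) ∧
                  ((i, j) ∉ P → dirDist (S i) (T j) = 1))
    (hTS : ∀ i j, ((j, i) ∈ Q → dirDist (T j) (S i) = 3) ∧
                  ((j, i) ∉ Q → dirDist (T j) (S i) = 1)) :
    (CISolvable F n P Q →
      Interleaved (stairSum F S fun i => (hS i).upClosed)
          (stairSum F T fun j => (hT j).upClosed) 1 ∧
      (∀ ε : ℝ, 0 ≤ ε → ε < 1 →
        ¬ Interleaved (stairSum F S fun i => (hS i).upClosed)
            (stairSum F T fun j => (hT j).upClosed) ε) ∧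
      interDist (stairSum F S fun i => (hS i).upClosed)
          (stairSum F T fun j => (hT j).upClosed) = 1) ∧
    (¬ CISolvable F n P Q →
      Interleaved (stairSum F S fun i => (hS i).upClosed)
          (stairSum F T fun j => (hT j).upClosed) 3 ∧
      (∀ ε : ℝ, 0 ≤ ε → ε < 3 →
        ¬ Interleaved (stairSum F S fun i => (hS i).upClosed)
            (stairSum F T fun j => (hT j).upClosed) ε) ∧
      interDist (stairSum F S fun i => (hS i).upClosed)
          (stairSum F T fun j => (hT j).upClosed) = 3) :=
  stmt_10_general F n hn P Q S T hS hT hST hTS
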